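/- arXiv:2503.17496 — 2 statements merged into one kernel-verified Lean document; each statement's English description precedes it below -/
import Mathlib

section
/- Let A ∈ ℂ^{n×n}, B ∈ ℂ^{m×m}, C, X ∈ ℂ^{m×n} with XA − BX = C, and let H = [[A, 0], [C, B]]. If a polynomial q ∈ ℂ[x] satisfies q(A) = I_n and q(B) = −I_m, then q(H) = [[I_n, 0], [2X, −I_m]]; in particular the lower-left m×n block of q(H) equals 2X. -/
/-!
The Sylvester equation `X * A - B * X = C` says exactly that conjugating `diag(A, B)` by the
unipotent matrix `[[1, 0], [X, 1]]` gives `H`. Polynomials commute with conjugation and act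
blockwise on `diag(A, B)`, so `q(H)` is the conjugate of `diag(q(A), q(B))`, whose lower-left
block is `X * q(A) - q(B) * X`; for `q(A) = 1`, `q(B) = -1` this is `2 • X`.
-/

open Matrix Polynomial

theorem Polynomial.aeval_units_conj {R A : Type*} [CommSemiring R] [Semiring A] [Algebra R A]
    (u : Aˣ) (a : A) (p : R[X]) : aeval (↑u * a * ↑u⁻¹) p = ↑u * aeval a p * ↑u⁻¹ :=
  aeval_algHom_apply (MulSemiringAction.toAlgHom R A (ConjAct.toConjAct u)) a p

namespace Matrix

variable {R n m : Type*} [CommRing R] [Fintype n] [Fintype m] [DecidableEq n] [DecidableEq m]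

theorem aeval_fromBlocks_zero_zero (A : Matrix n n R) (B : Matrix m m R) (p : R[X]) :
    aeval (fromBlocks A 0 0 B) p = fromBlocks (aeval A p) 0 0 (aeval B p) := by
  induction p using Polynomial.induction_on' with
  | add p q hp hq => simp only [map_add, hp, hq, fromBlocks_add, add_zero]
  | monomial k a =>
    simp only [aeval_monomial, ← Algebra.smul_def, fromBlocks_diagonal_pow, fromBlocks_smul,
      smul_zero]

def fromBlocksLowerUnit (X : Matrix m n R) : (Matrix (n ⊕ m) (n ⊕ m) R)ˣ where
  val := fromBlocks 1 0 X 1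
  inv := fromBlocks 1 0 (-X) 1
  val_inv := by simp [fromBlocks_multiply, fromBlocks_one]
  inv_val := by simp [fromBlocks_multiply, fromBlocks_one]

theorem fromBlocksLowerUnit_conj_fromBlocks_zero_zero (X : Matrix m n R) (P : Matrix n n R)
    (Q : Matrix m m R) :
    (fromBlocksLowerUnit X : Matrix (n ⊕ m) (n ⊕ m) R) * fromBlocks P 0 0 Q *
        (↑(fromBlocksLowerUnit X)⁻¹ : Matrix (n ⊕ m) (n ⊕ m) R) =
      fromBlocks P 0 (X * P - Q * X) Q := by
  simp only [fromBlocksLowerUnit, Units.inv_mk, fromBlocks_multiply]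
  simp [sub_eq_add_neg]

theorem aeval_fromBlocks_of_sylvester {A : Matrix n n R} {B : Matrix m m R} {C X : Matrix m n R}
    (hX : X * A - B * X = C) (p : R[X]) :
    aeval (fromBlocks A 0 C B) p =
      fromBlocks (aeval A p) 0 (X * aeval A p - aeval B p * X) (aeval B p) := by
  rw [← hX, ← fromBlocksLowerUnit_conj_fromBlocks_zero_zero, aeval_units_conj,
    aeval_fromBlocks_zero_zero, fromBlocksLowerUnit_conj_fromBlocks_zero_zero]

end Matrix

/-- If `X*A - B*X = C`, `H = [[A, 0], [C, B]]`, and a polynomial `q` satisfies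
`q(A) = I` and `q(B) = -I`, then `q(H) = [[I, 0], [2X, -I]]`; in particular the lower-left block
of `q(H)` is `2X`. -/
theorem aeval_block_sylvester_sign {n m : ℕ}
    (A : Matrix (Fin n) (Fin n) ℂ) (B : Matrix (Fin m) (Fin m) ℂ)
    (C X : Matrix (Fin m) (Fin n) ℂ)
    (hX : X * A - B * X = C)
    (q : Polynomial ℂ)
    (hqA : Polynomial.aeval A q = 1)
    (hqB : Polynomial.aeval B q = -1) :
    Polynomial.aeval (Matrix.fromBlocks A 0 C B) q =
        Matrix.fromBlocks 1 0 ((2 : ℂ) • X) (-1) ∧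
      (Polynomial.aeval (Matrix.fromBlocks A 0 C B) q).toBlocks₂₁ = (2 : ℂ) • X := by
  have hq : aeval (fromBlocks A 0 C B) q = fromBlocks 1 0 ((2 : ℂ) • X) (-1) := by
    rw [aeval_fromBlocks_of_sylvester hX, hqA, hqB, Matrix.mul_one, Matrix.neg_mul,
      Matrix.one_mul, sub_neg_eq_add, two_smul]
  exact ⟨hq, by rw [hq, toBlocks_fromBlocks₂₁]⟩
end

section
/- Let A ∈ ℂ^{n×n} and B ∈ ℂ^{m×m} be diagonalizable, A = V_A Λ_A V_A^{−1}, B = V_B Λ_B V_B^{−1}, with σ(A) ∩ σ(B) = ∅, let C ∈ ℂ^{m×n}, and let X be the unique solution of XA − BX = C. Suppose (p_j)_{j≥0} ⊂ ℂ[x] and (α_j)_{j≥0} ⊂ ℂ satisfy, for constants d, c > 0 and ρ > 1: |α_j| ≤ d·ρ^{−j} for all j, |p_j(λ − μ)| ≤ c for all j and all λ ∈ σ(A), μ ∈ σ(B), and Σ_{j≥0} α_j p_j(λ − μ) = 1/(λ − μ) for all λ ∈ σ(A), μ ∈ σ(B). Let X_k = Σ_{j=0}^{k−1} α_j · p_j(S_{A,B})(C).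 Then for every k ≥ 0, ‖X_k − X‖_F ≤ c·d·‖V_A‖₂·‖V_A^{−1}‖₂·‖V_B‖₂·‖V_B^{−1}‖₂·‖C‖_F·ρ^{−k}/(1 − ρ^{−1}). -/
/-- The Sylvester operator `Y ↦ Y*A - B*Y` as a linear endomorphism of `ℂ^{m×n}`. -/
noncomputable def sylvesterOp {n m : ℕ} (A : Matrix (Fin n) (Fin n) ℂ)
    (B : Matrix (Fin m) (Fin m) ℂ) : Module.End ℂ (Matrix (Fin m) (Fin n) ℂ) where
  toFun Y := Y * A - B * Y
  map_add' X Y := by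
    simp only [Matrix.add_mul, Matrix.mul_add, sub_add_sub_comm]
  map_smul' c Y := by
    simp [Matrix.smul_mul, Matrix.mul_smul, smul_sub]

/-- The spectral norm of a complex matrix: the operator norm of the induced linear map between
Euclidean spaces. -/
noncomputable def specNorm {m n : ℕ} (M : Matrix (Fin m) (Fin n) ℂ) : ℝ :=
  ‖LinearMap.toContinuousLinearMap (Matrix.toEuclideanLin M)‖

/-- The Frobenius norm of a complex matrix. -/
noncomputable def frobNorm {m n : ℕ} (M : Matrix (Fin m) (Fin n) ℂ) : ℝ :=
  Real.sqrt (∑ i, ∑ j, ‖M i j‖ ^ 2)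

/-!
The change of basis `Y ↦ V_B⁻¹ Y V_A` turns `S_{A,B}` into the entrywise multiplier by
`λ_j - μ_i`, hence `q(S_{A,B})` into the multiplier by `q(λ_j - μ_i)` and `X` into the multiplier
by `(λ_j - μ_i)⁻¹` applied to `C`. In these coordinates each entry of `X_k - X` is the tail of the
series `∑ α_l p_l(λ_j - μ_i) = (λ_j - μ_i)⁻¹` times the corresponding entry of `V_B⁻¹ C V_A`, and
the tail is geometrically small. An entrywise multiplier bound passes to the Frobenius norm, and
changing bases back and forth costs the four spectral norms via `‖P M Q‖_F ≤ ‖P‖₂ ‖M‖_F ‖Q‖₂`.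
-/

open Matrix Polynomial Finset

section Norms

variable {l m n : ℕ}

open scoped Matrix.Norms.L2Operator

lemma specNorm_eq_l2_opNorm (M : Matrix (Fin m) (Fin n) ℂ) : specNorm M = ‖M‖ := rfl

lemma specNorm_nonneg (M : Matrix (Fin m) (Fin n) ℂ) : 0 ≤ specNorm M := norm_nonneg _

lemma frobNorm_conjTranspose (M : Matrix (Fin m) (Fin n) ℂ) : frobNorm Mᴴ = frobNorm M := by
  simp only [frobNorm, conjTranspose_apply, norm_star]
  rw [Finset.sum_comm]

lemma frobNorm_eq_sqrt_sum_norm_col_sq (M : Matrix (Fin m) (Fin n) ℂ) :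
    frobNorm M = √(∑ j, ‖(EuclideanSpace.equiv (Fin m) ℂ).symm (fun i => M i j)‖ ^ 2) := by
  simp only [frobNorm, EuclideanSpace.norm_sq_eq]
  rw [Finset.sum_comm]
  rfl

lemma frobNorm_mul_le_specNorm_mul (P : Matrix (Fin m) (Fin l) ℂ) (M : Matrix (Fin l) (Fin n) ℂ) :
    frobNorm (P * M) ≤ specNorm P * frobNorm M := by
  have hcol (j : Fin n) : (fun i => (P * M) i j) = P *ᵥ fun k => M k j := by
    ext i; simp [mul_apply, mulVec, dotProduct]
  rw [frobNorm_eq_sqrt_sum_norm_col_sq, frobNorm_eq_sqrt_sum_norm_col_sq, specNorm_eq_l2_opNorm,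
    ← Real.sqrt_sq (norm_nonneg P), ← Real.sqrt_mul (sq_nonneg _), Finset.mul_sum]
  refine Real.sqrt_le_sqrt (Finset.sum_le_sum fun j _ => ?_)
  rw [hcol, ← mul_pow]
  have := P.l2_opNorm_mulVec ((EuclideanSpace.equiv (Fin l) ℂ).symm fun k => M k j)
  exact pow_le_pow_left₀ (norm_nonneg _) this 2

lemma frobNorm_mul_le_mul_specNorm (M : Matrix (Fin m) (Fin l) ℂ) (Q : Matrix (Fin l) (Fin n) ℂ) :
    frobNorm (M * Q) ≤ frobNorm M * specNorm Q := by
  rw [← frobNorm_conjTranspose, conjTranspose_mul, mul_comm, ← frobNorm_conjTranspose M,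
    specNorm_eq_l2_opNorm, ← l2_opNorm_conjTranspose]
  exact frobNorm_mul_le_specNorm_mul _ _

lemma frobNorm_mul_mul_le {k : ℕ} (P : Matrix (Fin m) (Fin l) ℂ) (M : Matrix (Fin l) (Fin n) ℂ)
    (Q : Matrix (Fin n) (Fin k) ℂ) :
    frobNorm (P * M * Q) ≤ specNorm P * frobNorm M * specNorm Q :=
  (frobNorm_mul_le_mul_specNorm _ _).trans <|
    mul_le_mul_of_nonneg_right (frobNorm_mul_le_specNorm_mul _ _) (specNorm_nonneg _)

lemma frobNorm_le_mul_of_norm_apply_le {M N : Matrix (Fin m) (Fin n) ℂ} {K : ℝ} (hK : 0 ≤ K)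
    (h : ∀ i j, ‖M i j‖ ≤ K * ‖N i j‖) : frobNorm M ≤ K * frobNorm N := by
  rw [frobNorm, frobNorm, ← Real.sqrt_sq hK, ← Real.sqrt_mul (sq_nonneg K)]
  refine Real.sqrt_le_sqrt ?_
  simp only [Finset.mul_sum, ← mul_pow]
  gcongr with i _ j _
  exact h i j

lemma frobNorm_le_of_norm_conj_apply_le {P : Matrix (Fin m) (Fin m) ℂ}
    {Q : Matrix (Fin n) (Fin n) ℂ} (hP : IsUnit P.det) (hQ : IsUnit Q.det)
    {M N : Matrix (Fin m) (Fin n) ℂ} {K : ℝ} (hK : 0 ≤ K)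
    (h : ∀ i j, ‖(P⁻¹ * M * Q) i j‖ ≤ K * ‖(P⁻¹ * N * Q) i j‖) :
    frobNorm M ≤ K * (specNorm P * specNorm P⁻¹ * specNorm Q * specNorm Q⁻¹) * frobNorm N := by
  calc frobNorm M = frobNorm (P * (P⁻¹ * M * Q) * Q⁻¹) := by
        rw [← Matrix.mul_assoc, ← Matrix.mul_assoc, mul_nonsing_inv _ hP, Matrix.one_mul,
          mul_nonsing_inv_cancel_right _ _ hQ]
    _ ≤ specNorm P * frobNorm (P⁻¹ * M * Q) * specNorm Q⁻¹ := frobNorm_mul_mul_le _ _ _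
    _ ≤ specNorm P * (K * frobNorm (P⁻¹ * N * Q)) * specNorm Q⁻¹ :=
        mul_le_mul_of_nonneg_right (mul_le_mul_of_nonneg_left
          (frobNorm_le_mul_of_norm_apply_le hK h) (specNorm_nonneg _)) (specNorm_nonneg _)
    _ ≤ specNorm P * (K * (specNorm P⁻¹ * frobNorm N * specNorm Q)) * specNorm Q⁻¹ :=
        mul_le_mul_of_nonneg_right (mul_le_mul_of_nonneg_left (mul_le_mul_of_nonneg_left
          (frobNorm_mul_mul_le _ _ _) hK) (specNorm_nonneg _)) (specNorm_nonneg _)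
    _ = K * (specNorm P * specNorm P⁻¹ * specNorm Q * specNorm Q⁻¹) * frobNorm N := by ring

end Norms

lemma spectrum_conj_diagonal {K ι : Type*} [Field K] [Fintype ι] [DecidableEq ι]
    {V : Matrix ι ι K} (hV : IsUnit V.det) (d : ι → K) :
    spectrum K (V * diagonal d * V⁻¹) = Set.range d := by
  have hconj : V * diagonal d * V⁻¹ =
      (V.nonsingInvUnit hV : Matrix ι ι K) * diagonal d *
        ((V.nonsingInvUnit hV)⁻¹ : (Matrix ι ι K)ˣ) := rfl
  rw [hconj, spectrum.units_conjugate, spectrum_diagonal]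

theorem LinearMap.comp_aeval_eq_aeval_comp {R M N : Type*} [CommSemiring R] [AddCommMonoid M]
    [Module R M] [AddCommMonoid N] [Module R N] {f : Module.End R M} {g : Module.End R N}
    {T : M →ₗ[R] N} (h : T ∘ₗ f = g ∘ₗ T) (q : R[X]) : T ∘ₗ aeval f q = aeval g q ∘ₗ T := by
  induction q using Polynomial.induction_on' with
  | add p q hp hq => simp [LinearMap.comp_add, LinearMap.add_comp, hp, hq]
  | monomial k c =>
    simp only [aeval_monomial, Algebra.algebraMap_eq_smul_one, smul_mul_assoc, one_mul,
      LinearMap.comp_smul, LinearMap.smul_comp]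
    rw [Module.End.commute_pow_left_of_commute h.symm k]

section Sylvester

variable {n m : ℕ}

lemma sylvesterOp_apply (A : Matrix (Fin n) (Fin n) ℂ) (B : Matrix (Fin m) (Fin m) ℂ)
    (Y : Matrix (Fin m) (Fin n) ℂ) : sylvesterOp A B Y = Y * A - B * Y := rfl

lemma sylvesterOp_conj {VA : Matrix (Fin n) (Fin n) ℂ} {VB : Matrix (Fin m) (Fin m) ℂ}
    (hVA : IsUnit VA.det) (hVB : IsUnit VB.det) (ΛA : Matrix (Fin n) (Fin n) ℂ)
    (ΛB : Matrix (Fin m) (Fin m) ℂ) (Y : Matrix (Fin m) (Fin n) ℂ) :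
    VB⁻¹ * sylvesterOp (VA * ΛA * VA⁻¹) (VB * ΛB * VB⁻¹) Y * VA =
      sylvesterOp ΛA ΛB (VB⁻¹ * Y * VA) := by
  simp only [sylvesterOp_apply, Matrix.mul_sub, Matrix.sub_mul, Matrix.mul_assoc,
    nonsing_inv_mul_cancel_left _ _ hVB, nonsing_inv_mul _ hVA, Matrix.mul_one]

lemma aeval_sylvesterOp_conj {VA : Matrix (Fin n) (Fin n) ℂ} {VB : Matrix (Fin m) (Fin m) ℂ}
    (hVA : IsUnit VA.det) (hVB : IsUnit VB.det) (ΛA : Matrix (Fin n) (Fin n) ℂ)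
    (ΛB : Matrix (Fin m) (Fin m) ℂ) (q : ℂ[X]) (Y : Matrix (Fin m) (Fin n) ℂ) :
    VB⁻¹ * aeval (sylvesterOp (VA * ΛA * VA⁻¹) (VB * ΛB * VB⁻¹)) q Y * VA =
      aeval (sylvesterOp ΛA ΛB) q (VB⁻¹ * Y * VA) := by
  let T := mulRightLinearMap (Fin m) ℂ VA ∘ₗ mulLeftLinearMap (Fin n) ℂ VB⁻¹
  have hT : T ∘ₗ sylvesterOp (VA * ΛA * VA⁻¹) (VB * ΛB * VB⁻¹) = sylvesterOp ΛA ΛB ∘ₗ T :=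
    LinearMap.ext (sylvesterOp_conj hVA hVB ΛA ΛB)
  exact LinearMap.congr_fun (LinearMap.comp_aeval_eq_aeval_comp hT q) Y

section Diagonal

variable (a : Fin n → ℂ) (b : Fin m → ℂ)

lemma sylvesterOp_diagonal_apply (Y : Matrix (Fin m) (Fin n) ℂ) (i : Fin m) (j : Fin n) :
    sylvesterOp (diagonal a) (diagonal b) Y i j = (a j - b i) * Y i j := by
  simp only [sylvesterOp_apply, Matrix.sub_apply, mul_diagonal, diagonal_mul]
  ring

lemma sylvesterOp_diagonal_pow_apply (k : ℕ) (Y : Matrix (Fin m) (Fin n) ℂ) (i : Fin m)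
    (j : Fin n) : (sylvesterOp (diagonal a) (diagonal b) ^ k) Y i j = (a j - b i) ^ k * Y i j := by
  induction k generalizing Y with
  | zero => simp
  | succ k ih => rw [pow_succ, Module.End.mul_apply, ih, sylvesterOp_diagonal_apply]; ring

lemma aeval_sylvesterOp_diagonal_apply (q : ℂ[X]) (Y : Matrix (Fin m) (Fin n) ℂ) (i : Fin m)
    (j : Fin n) :
    aeval (sylvesterOp (diagonal a) (diagonal b)) q Y i j = q.eval (a j - b i) * Y i j := by
  induction q using Polynomial.induction_on' with
  | add p q hp hq => simp [hp, hq, add_mul]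
  | monomial k c => simp [aeval_monomial, sylvesterOp_diagonal_pow_apply, mul_assoc]

end Diagonal

lemma conj_aeval_sylvesterOp_sub_apply {VA : Matrix (Fin n) (Fin n) ℂ}
    {VB : Matrix (Fin m) (Fin m) ℂ} (hVA : IsUnit VA.det) (hVB : IsUnit VB.det)
    {a : Fin n → ℂ} {b : Fin m → ℂ} {X C : Matrix (Fin m) (Fin n) ℂ}
    (hX : sylvesterOp (VA * diagonal a * VA⁻¹) (VB * diagonal b * VB⁻¹) X = C)
    {i : Fin m} {j : Fin n} (hab : a j ≠ b i) (q : ℂ[X]) :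
    (VB⁻¹ * (aeval (sylvesterOp (VA * diagonal a * VA⁻¹) (VB * diagonal b * VB⁻¹)) q C - X) *
        VA) i j = (q.eval (a j - b i) - (a j - b i)⁻¹) * (VB⁻¹ * C * VA) i j := by
  have hXij : (VB⁻¹ * C * VA) i j = (a j - b i) * (VB⁻¹ * X * VA) i j := by
    rw [← hX, sylvesterOp_conj hVA hVB, sylvesterOp_diagonal_apply]
  rw [Matrix.mul_sub, Matrix.sub_mul, Matrix.sub_apply, aeval_sylvesterOp_conj hVA hVB,
    aeval_sylvesterOp_diagonal_apply, hXij, sub_mul (eval _ q),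
    inv_mul_cancel_left₀ (sub_ne_zero.2 hab)]

end Sylvester

/-- Let `A = V_A Λ_A V_A⁻¹`, `B = V_B Λ_B V_B⁻¹` be diagonalizable with
disjoint spectra, and let `X` be the solution of `X*A - B*X = C`.  Suppose `|α_j| ≤ d·ρ^{-j}`
with `ρ > 1`, `|p_j(λ-μ)| ≤ c` and `Σ_j α_j p_j(λ-μ) = 1/(λ-μ)` for all `λ ∈ σ(A)`,
`μ ∈ σ(B)`.  Then with `X_k = Σ_{j<k} α_j p_j(S_{A,B})(C)`,
`‖X_k - X‖_F ≤ c·d·‖V_A‖₂‖V_A⁻¹‖₂‖V_B‖₂‖V_B⁻¹‖₂·‖C‖_F·ρ^{-k}/(1-ρ⁻¹)` for every `k`. -/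
theorem sylvesterOp_inverse_iteration_conv_rate {n m : ℕ}
    (A : Matrix (Fin n) (Fin n) ℂ) (B : Matrix (Fin m) (Fin m) ℂ)
    (C X : Matrix (Fin m) (Fin n) ℂ)
    (VA ΛA : Matrix (Fin n) (Fin n) ℂ)
    (hVA : IsUnit VA.det) (hΛA : ΛA.IsDiag) (hA : A = VA * ΛA * VA⁻¹)
    (VB ΛB : Matrix (Fin m) (Fin m) ℂ)
    (hVB : IsUnit VB.det) (hΛB : ΛB.IsDiag) (hB : B = VB * ΛB * VB⁻¹)
    (hdisj : spectrum ℂ A ∩ spectrum ℂ B = ∅)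
    (hX : X * A - B * X = C)
    (p : ℕ → Polynomial ℂ) (α : ℕ → ℂ)
    (d c ρ : ℝ) (hd : 0 < d) (hc : 0 < c) (hρ : 1 < ρ)
    (hα : ∀ j, ‖α j‖ ≤ d * ρ⁻¹ ^ j)
    (hp : ∀ j, ∀ lam ∈ spectrum ℂ A, ∀ μ ∈ spectrum ℂ B, ‖(p j).eval (lam - μ)‖ ≤ c)
    (hinv : ∀ lam ∈ spectrum ℂ A, ∀ μ ∈ spectrum ℂ B,
      HasSum (fun j => α j * (p j).eval (lam - μ)) (lam - μ)⁻¹) :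
    ∀ k, frobNorm ((∑ j ∈ Finset.range k,
          α j • Polynomial.aeval (sylvesterOp A B) (p j) C) - X) ≤
        c * d * specNorm VA * specNorm VA⁻¹ * specNorm VB * specNorm VB⁻¹ * frobNorm C *
          ρ⁻¹ ^ k / (1 - ρ⁻¹) := by
  intro k
  obtain ⟨a, rfl⟩ : ∃ a, ΛA = diagonal a := ⟨ΛA.diag, hΛA.diagonal_diag.symm⟩
  obtain ⟨b, rfl⟩ : ∃ b, ΛB = diagonal b := ⟨ΛB.diag, hΛB.diagonal_diag.symm⟩
  subst hA hB
  rw [spectrum_conj_diagonal hVA, spectrum_conj_diagonal hVB] at hp hinv hdisj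
  have hρ' : ρ⁻¹ < 1 := inv_lt_one_of_one_lt₀ hρ
  have hE : 0 ≤ c * d * ρ⁻¹ ^ k / (1 - ρ⁻¹) := div_nonneg (by positivity) (sub_nonneg.2 hρ'.le)
  have hXk (S : Module.End ℂ (Matrix (Fin m) (Fin n) ℂ)) :
      ∑ l ∈ range k, α l • aeval S (p l) C = aeval S (∑ l ∈ range k, α l • p l) C := by
    simp only [map_sum, map_smul, LinearMap.sum_apply, LinearMap.smul_apply]
  rw [hXk]
  refine (frobNorm_le_of_norm_conj_apply_le hVB hVA hE fun i j => ?_).trans_eq (by ring)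
  have hab : a j ≠ b i := fun h => Set.eq_empty_iff_forall_notMem.1 hdisj _ ⟨⟨j, rfl⟩, i, h.symm⟩
  rw [conj_aeval_sylvesterOp_sub_apply hVA hVB hX hab, norm_mul, eval_finsetSum]
  gcongr
  simp only [eval_smul, smul_eq_mul]
  refine norm_sub_le_of_geometric_bound_of_hasSum hρ' (fun l => ?_) (hinv _ ⟨j, rfl⟩ _ ⟨i, rfl⟩) k
  calc ‖α l * (p l).eval (a j - b i)‖ ≤ d * ρ⁻¹ ^ l * c := by
        rw [norm_mul]
        exact mul_le_mul (hα l) (hp l _ ⟨j, rfl⟩ _ ⟨i, rfl⟩) (norm_nonneg _) (by positivity)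
    _ = c * d * ρ⁻¹ ^ l := by ring
end
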